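/- Let V be a commutative unital quantale, (X,a) an L-complete V-category, and M ⊆ X an L-closed subset (cl(M) = M, where cl(M) = {x ∈ X | k ≤ ⋁_{y∈M} a(x,y) ⊗ a(y,x)}). Then M with the restricted structure a|_{M×M} is an L-complete V-category. -/

import Mathlib

/-!
A right adjoint module `ψ` on `M`, with left adjoint `φ`, extends to `X` by
`ψ' x = ⋁_{m ∈ M} a(x,m) ⊗ ψ(m)` and `φ' x = ⋁_{m ∈ M} φ(m) ⊗ a(m,x)`; the pair `(ψ', φ')` is
again adjoint and `ψ'` restricts to `ψ` on `M`. By L-completeness of `X`, `ψ' = a(-,x₀)`, and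
evaluating at `x₀` gives `k ≤ a(x₀,x₀) = ⋁_{m ∈ M} a(x₀,m) ⊗ a(m,x₀)`, so `x₀ ∈ cl(M) = M`.
-/

open Quantale

namespace VCategory

variable {V : Type*} [CommMonoid V] [CompleteLattice V] [IsQuantale V] {X ι : Type*}

/-- The module `ψ : X ⇸ E` is right adjoint, with left adjoint `φ`. -/
def HasLeftAdjoint (a : X → X → V) (ψ : X → V) : Prop :=
  ∃ φ : X → V, (∀ x y, φ y * a y x ≤ φ x) ∧ (∀ x y, ψ x * φ y ≤ a x y) ∧
    (1 : V) ≤ ⨆ x, φ x * ψ x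

/-- The extension of `ψ : ι → V` along `f : ι → X`; for `a` replaced by `flip a` it is the
extension of a module in the other variance, `x ↦ ⋁ i, ψ i ⊗ a (f i) x`. -/
def extendAlong (a : X → X → V) (f : ι → X) (ψ : ι → V) (x : X) : V :=
  ⨆ i, a x (f i) * ψ i

variable (a : X → X → V) (f : ι → X)

theorem le_extendAlong_apply (ha1 : ∀ x, (1 : V) ≤ a x x) (ψ : ι → V) (i : ι) :
    ψ i ≤ extendAlong a f ψ (f i) :=
  calc ψ i = 1 * ψ i := (one_mul _).symm
    _ ≤ a (f i) (f i) * ψ i := mul_le_mul_left (ha1 _) _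
    _ ≤ extendAlong a f ψ (f i) := le_iSup (fun j => a (f i) (f j) * ψ j) i

theorem extendAlong_apply_eq (ha1 : ∀ x, (1 : V) ≤ a x x) {ψ : ι → V}
    (hψ : ∀ i j, a (f i) (f j) * ψ j ≤ ψ i) (i : ι) :
    extendAlong a f ψ (f i) = ψ i :=
  le_antisymm (iSup_le (hψ i)) (le_extendAlong_apply a f ha1 ψ i)

theorem extendAlong_isModule (ha2 : ∀ x y z, a x y * a y z ≤ a x z) (ψ : ι → V) (x y : X) :
    a x y * extendAlong a f ψ y ≤ extendAlong a f ψ x := by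
  rw [extendAlong, mul_iSup_distrib]
  refine iSup_mono fun i => ?_
  rw [← mul_assoc]
  exact mul_le_mul_left (ha2 _ _ _) _

theorem extendAlong_mul_extendAlong_flip_le (ha2 : ∀ x y z, a x y * a y z ≤ a x z)
    {ψ φ : ι → V} (hadj : ∀ i j, ψ i * φ j ≤ a (f i) (f j)) (x y : X) :
    extendAlong a f ψ x * extendAlong (flip a) f φ y ≤ a x y := by
  rw [extendAlong, iSup_mul_distrib]
  refine iSup_le fun i => ?_
  rw [extendAlong, mul_iSup_distrib]
  refine iSup_le fun j => ?_
  calc a x (f i) * ψ i * (a (f j) y * φ j)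
      = a x (f i) * (ψ i * φ j) * a (f j) y := by ac_rfl
    _ ≤ a x (f i) * a (f i) (f j) * a (f j) y := by gcongr; exact hadj i j
    _ ≤ a x (f j) * a (f j) y := mul_le_mul_left (ha2 _ _ _) _
    _ ≤ a x y := ha2 _ _ _

theorem extendAlong_hasLeftAdjoint (ha1 : ∀ x, (1 : V) ≤ a x x)
    (ha2 : ∀ x y z, a x y * a y z ≤ a x z) {ψ φ : ι → V}
    (hadj : ∀ i j, ψ i * φ j ≤ a (f i) (f j)) (hunit : (1 : V) ≤ ⨆ i, φ i * ψ i) :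
    HasLeftAdjoint a (extendAlong a f ψ) := by
  have flip_trans : ∀ x y z, flip a x y * flip a y z ≤ flip a x z := fun x y z => by
    simpa only [flip, mul_comm] using ha2 z y x
  refine ⟨extendAlong (flip a) f φ, fun x y => ?_,
    extendAlong_mul_extendAlong_flip_le a f ha2 hadj, ?_⟩
  · rw [mul_comm]
    exact extendAlong_isModule (flip a) f flip_trans φ x y
  · refine hunit.trans (le_trans (iSup_mono fun i => ?_) (iSup_comp_le _ f))
    exact mul_le_mul' (le_extendAlong_apply (flip a) f ha1 φ i) (le_extendAlong_apply a f ha1 ψ i)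

/-- A point representing the extension of a module along `f` lies in the L-closure of the
range of `f`. -/
theorem one_le_iSup_of_extendAlong_eq (ha1 : ∀ x, (1 : V) ≤ a x x) {ψ : ι → V} {x₀ : X}
    (hx₀ : ∀ x, extendAlong a f ψ x = a x x₀) :
    (1 : V) ≤ ⨆ i, a x₀ (f i) * a (f i) x₀ :=
  calc (1 : V) ≤ a x₀ x₀ := ha1 x₀
    _ = extendAlong a f ψ x₀ := (hx₀ x₀).symm
    _ ≤ ⨆ i, a x₀ (f i) * a (f i) x₀ := iSup_mono fun i => by
        rw [← hx₀ (f i)]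
        exact mul_le_mul_right (le_extendAlong_apply a f ha1 ψ i) _

end VCategory

open VCategory in
/-- an L-closed subset `M` of an L-complete V-category `(X,a)` is itself
L-complete with the restricted structure. -/
theorem stmt15 {V : Type*} [CommMonoid V] [CompleteLattice V] [IsQuantale V]
    {X : Type*}
    (a : X → X → V) (ha1 : ∀ x, (1 : V) ≤ a x x)
    (ha2 : ∀ x y z, a x y * a y z ≤ a x z)
    -- X is L-complete:
    (hX : ∀ ψ : X → V, (∀ x y, a x y * ψ y ≤ ψ x) →
      (∃ φ : X → V, (∀ x y, φ y * a y x ≤ φ x) ∧ (∀ x y, ψ x * φ y ≤ a x y) ∧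
        (1 : V) ≤ ⨆ x : X, φ x * ψ x) →
      ∃ x₀ : X, ∀ x, ψ x = a x x₀)
    -- M is L-closed:
    (M : Set X)
    (hM : {x : X | (1 : V) ≤ ⨆ y ∈ M, a x y * a y x} = M) :
    -- M with the restricted structure is L-complete:
    ∀ ψ : M → V, (∀ x y : M, a x.1 y.1 * ψ y ≤ ψ x) →
      (∃ φ : M → V, (∀ x y : M, φ y * a y.1 x.1 ≤ φ x) ∧
        (∀ x y : M, ψ x * φ y ≤ a x.1 y.1) ∧ (1 : V) ≤ ⨆ x : M, φ x * ψ x) →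
      ∃ x₀ : M, ∀ x : M, ψ x = a x.1 x₀.1 := by
  rintro ψ hψ ⟨φ, -, hadj, hunit⟩
  obtain ⟨x₀, hx₀⟩ := hX (extendAlong a Subtype.val ψ) (extendAlong_isModule a _ ha2 ψ)
    (extendAlong_hasLeftAdjoint a _ ha1 ha2 hadj hunit)
  have hx₀M : x₀ ∈ M := by
    rw [← hM, Set.mem_ofPred_eq, ← iSup_subtype (f := fun y : M => a x₀ y * a y x₀)]
    exact one_le_iSup_of_extendAlong_eq a _ ha1 hx₀
  refine ⟨⟨x₀, hx₀M⟩, fun x => ?_⟩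
  rw [← hx₀, extendAlong_apply_eq a _ ha1 hψ]
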